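/- arXiv:2112.13257 — 2 statements merged into one kernel-verified Lean document; each statement's English description precedes it below -/
import Mathlib

section
/- Suppose κ > 0 and σ ∈ (0,1) satisfy ‖R̄^k − 1_n π^T‖ ≤ κ σ^k for all k ≥ 0. Then (R̄^k)_{ii} > 0 for all i and all k ≥ 0, the quantity ṽ := sup_{k≥0} max_{1≤i≤n} ((R̄^k)_{ii})^{-1} is finite and satisfies ṽ ≥ max_i π_i^{-1}, and for all k ≥ 0: max_{1≤i≤n} |((R̄^k)_{ii})^{-1} − π_i^{-1}| ≤ ṽ² √n κ σ^k. -/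
open Matrix Filter
open scoped Kronecker

noncomputable section

/-- Euclidean norm on `ι → ℝ`. -/
def eucNorm {ι : Type*} [Fintype ι] (z : ι → ℝ) : ℝ := Real.sqrt (∑ i, z i ^ 2)

/-- Spectral norm (operator 2-norm) of a square real matrix. -/
def specNorm {ι : Type*} [Fintype ι] (A : Matrix ι ι ℝ) : ℝ :=
  sSup {c : ℝ | ∃ z : ι → ℝ, eucNorm z ≤ 1 ∧ c = eucNorm (A.mulVec z)}

/-- Matrix norm induced by a vector norm `N`: `sup_{z ≠ 0} N (A z) / N z`. -/
def opNorm {ι : Type*} [Fintype ι] (N : (ι → ℝ) → ℝ) (A : Matrix ι ι ℝ) : ℝ :=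
  sSup {c : ℝ | ∃ z : ι → ℝ, z ≠ 0 ∧ c = N (A.mulVec z) / N z}

/-- `g` is the gradient of `f : ℝ^p → ℝ`. -/
def IsGradient {p : ℕ} (f : (Fin p → ℝ) → ℝ) (g : (Fin p → ℝ) → Fin p → ℝ) : Prop :=
  ∀ x, HasFDerivAt f (∑ j, g x j • (ContinuousLinearMap.proj j : (Fin p → ℝ) →L[ℝ] ℝ)) x

/-- `R = R̄ ⊗ I_p`. -/
def RK (n p : ℕ) (Rb : Matrix (Fin n) (Fin n) ℝ) :
    Matrix (Fin n × Fin p) (Fin n × Fin p) ℝ :=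
  Rb ⊗ₖ (1 : Matrix (Fin p) (Fin p) ℝ)

/-- `V_∞ = (1_n π^T) ⊗ I_p`. -/
def VinfK (n p : ℕ) (π : Fin n → ℝ) :
    Matrix (Fin n × Fin p) (Fin n × Fin p) ℝ :=
  (Matrix.of (fun _ j => π j) : Matrix (Fin n) (Fin n) ℝ) ⊗ₖ (1 : Matrix (Fin p) (Fin p) ℝ)

/-- `V(k) = R̄^k ⊗ I_p`. -/
def VK (n p : ℕ) (Rb : Matrix (Fin n) (Fin n) ℝ) (k : ℕ) :
    Matrix (Fin n × Fin p) (Fin n × Fin p) ℝ :=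
  (Rb ^ k) ⊗ₖ (1 : Matrix (Fin p) (Fin p) ℝ)

/-- `Ṽ(k)⁻¹ = diag(((R̄^k)_{11})⁻¹, …, ((R̄^k)_{nn})⁻¹) ⊗ I_p`. -/
def VtinvK (n p : ℕ) (Rb : Matrix (Fin n) (Fin n) ℝ) (k : ℕ) :
    Matrix (Fin n × Fin p) (Fin n × Fin p) ℝ :=
  Matrix.diagonal (fun q => ((Rb ^ k) q.1 q.1)⁻¹)

/-- `∇f(z) = (∇f_1(z_1), …, ∇f_n(z_n))` block-wise. -/
def gradf {n p : ℕ} (g : Fin n → (Fin p → ℝ) → Fin p → ℝ) (z : Fin n × Fin p → ℝ) :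
    Fin n × Fin p → ℝ :=
  fun q => g q.1 (fun j => z (q.1, j)) q.2

/-- `x*_vec = 1_n ⊗ x*`. -/
def starVec (n p : ℕ) (xstar : Fin p → ℝ) : Fin n × Fin p → ℝ := fun q => xstar q.2

end

lemma abs_le_eucNorm {ι : Type*} [Fintype ι] (z : ι → ℝ) (i : ι) : |z i| ≤ eucNorm z := by
  rw [eucNorm, ← Real.sqrt_sq_eq_abs]
  exact Real.sqrt_le_sqrt (Finset.single_le_sum (fun j _ => sq_nonneg (z j)) (Finset.mem_univ i))

lemma eucNorm_mulVec_le {ι : Type*} [Fintype ι] (A : Matrix ι ι ℝ) (z : ι → ℝ) :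
    eucNorm (A.mulVec z) ≤ Real.sqrt (∑ i, ∑ j, A i j ^ 2) * eucNorm z := by
  rw [eucNorm, eucNorm, ← Real.sqrt_mul (by positivity)]
  apply Real.sqrt_le_sqrt
  rw [Finset.sum_mul]
  apply Finset.sum_le_sum
  intro i _
  have : A.mulVec z i = ∑ j, A i j * z j := rfl
  rw [this]
  exact Finset.sum_mul_sq_le_sq_mul_sq _ _ _

lemma abs_entry_le_specNorm {ι : Type*} [Fintype ι] [DecidableEq ι] (A : Matrix ι ι ℝ)
    (i j : ι) : |A i j| ≤ specNorm A := by
  have h1 : eucNorm (Pi.single j (1 : ℝ) : ι → ℝ) = 1 := by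
    have hs : (∑ l, ((Pi.single j (1:ℝ) : ι → ℝ) l) ^ 2) = 1 := by
      simp [Pi.single_apply, sq]
    rw [eucNorm, hs, Real.sqrt_one]
  have hmem : eucNorm (A.mulVec (Pi.single j 1)) ∈
      {c : ℝ | ∃ z : ι → ℝ, eucNorm z ≤ 1 ∧ c = eucNorm (A.mulVec z)} :=
    ⟨(Pi.single j 1 : ι → ℝ), le_of_eq h1, rfl⟩
  have hbdd : BddAbove {c : ℝ | ∃ z : ι → ℝ, eucNorm z ≤ 1 ∧ c = eucNorm (A.mulVec z)} := by
    refine ⟨Real.sqrt (∑ i, ∑ j, A i j ^ 2), ?_⟩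
    rintro c ⟨z, hz, rfl⟩
    calc eucNorm (A.mulVec z) ≤ Real.sqrt (∑ i, ∑ j, A i j ^ 2) * eucNorm z :=
          eucNorm_mulVec_le A z
      _ ≤ Real.sqrt (∑ i, ∑ j, A i j ^ 2) * 1 := by
          exact mul_le_mul_of_nonneg_left hz (Real.sqrt_nonneg _)
      _ = _ := mul_one _
  calc |A i j| = |(A.mulVec (Pi.single j 1)) i| := by
        rw [Matrix.mulVec_single]; simp
    _ ≤ eucNorm (A.mulVec (Pi.single j 1)) := abs_le_eucNorm _ i
    _ ≤ specNorm A := le_csSup hbdd hmem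

/-- positivity of the diagonal entries of the powers `R̄^k`, finiteness of
`ṽ = sup_k max_i ((R̄^k)_{ii})⁻¹`, the bound `ṽ ≥ max_i π_i⁻¹`, and the estimate
`max_i |((R̄^k)_{ii})⁻¹ − π_i⁻¹| ≤ ṽ² √n κ σ^k`. -/
theorem stmt5 (n : ℕ) (hn : 1 ≤ n) (Rb : Matrix (Fin n) (Fin n) ℝ)
    (hnonneg : ∀ i j, 0 ≤ Rb i j) (hrow : ∀ i, ∑ j, Rb i j = 1)
    (hdiag : ∀ i, 0 < Rb i i)
    (hirr : ∀ i j, ∃ k : ℕ, 0 < (Rb ^ k) i j)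
    (π : Fin n → ℝ) (hπpos : ∀ i, 0 < π i) (hπsum : ∑ i, π i = 1)
    (hπstat : Matrix.vecMul π Rb = π)
    (κ σ : ℝ) (hκ : 0 < κ) (hσ0 : 0 < σ) (hσ1 : σ < 1)
    (hbound : ∀ k : ℕ,
      specNorm (Rb ^ k - (Matrix.of (fun _ j => π j) : Matrix (Fin n) (Fin n) ℝ)) ≤
        κ * σ ^ k) :
    (∀ (i : Fin n) (k : ℕ), 0 < (Rb ^ k) i i) ∧
    BddAbove (Set.range fun k : ℕ => ⨆ i, ((Rb ^ k) i i)⁻¹) ∧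
    (∀ i : Fin n, (π i)⁻¹ ≤ ⨆ m : ℕ, ⨆ j, ((Rb ^ m) j j)⁻¹) ∧
    (∀ (k : ℕ) (i : Fin n),
      |((Rb ^ k) i i)⁻¹ - (π i)⁻¹| ≤
        (⨆ m : ℕ, ⨆ j, ((Rb ^ m) j j)⁻¹) ^ 2 * Real.sqrt n * κ * σ ^ k) := by
  haveI : NeZero n := ⟨by omega⟩
  -- nonnegativity of powers
  have hpnn : ∀ (k : ℕ) (i j : Fin n), 0 ≤ (Rb ^ k) i j := by
    intro k
    induction k with
    | zero => intro i j; rw [pow_zero]; by_cases h : i = j <;> simp [Matrix.one_apply, h]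
    | succ k ih =>
      intro i j
      rw [pow_succ, Matrix.mul_apply]
      exact Finset.sum_nonneg fun l _ => mul_nonneg (ih i l) (hnonneg l j)
  -- positivity of diagonal entries of powers
  have hpos : ∀ (i : Fin n) (k : ℕ), 0 < (Rb ^ k) i i := by
    intro i k
    induction k with
    | zero => simp [Matrix.one_apply]
    | succ k ih =>
      rw [pow_succ, Matrix.mul_apply]
      exact Finset.sum_pos' (fun l _ => mul_nonneg (hpnn k i l) (hnonneg l i))
        ⟨i, Finset.mem_univ i, mul_pos ih (hdiag i)⟩
  -- entrywise bound
  have hentry : ∀ (k : ℕ) (i : Fin n), |(Rb ^ k) i i - π i| ≤ κ * σ ^ k := by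
    intro k i
    have h := abs_entry_le_specNorm
      (Rb ^ k - (Matrix.of (fun _ j => π j) : Matrix (Fin n) (Fin n) ℝ)) i i
    simpa [Matrix.sub_apply] using h.trans (hbound k)
  -- uniform positive lower bound on diagonal entries
  have huniv : (Finset.univ : Finset (Fin n)).Nonempty := Finset.univ_nonempty
  set m : ℝ := Finset.univ.inf' huniv π with hm_def
  have hm : 0 < m := (Finset.lt_inf'_iff huniv).mpr fun i _ => hπpos i
  obtain ⟨K, hK⟩ := exists_pow_lt_of_lt_one (show (0:ℝ) < m / (2 * κ) by positivity) hσ1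
  have hKk : ∀ k, K ≤ k → κ * σ ^ k < m / 2 := by
    intro k hk
    have h1 : σ ^ k ≤ σ ^ K := pow_le_pow_of_le_one hσ0.le hσ1.le hk
    have h2 : κ * σ ^ K < κ * (m / (2 * κ)) := by
      exact mul_lt_mul_of_pos_left hK hκ
    have h3 : κ * (m / (2 * κ)) = m / 2 := by field_simp
    calc κ * σ ^ k ≤ κ * σ ^ K := by nlinarith
      _ < m / 2 := h3 ▸ h2
  have hsne : ((Finset.range (K + 1)) ×ˢ (Finset.univ : Finset (Fin n))).Nonempty :=
    Finset.Nonempty.product ⟨0, Finset.mem_range.mpr (Nat.succ_pos K)⟩ huniv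
  set c : ℝ := min (m / 2)
    (((Finset.range (K + 1)) ×ˢ (Finset.univ : Finset (Fin n))).inf' hsne
      fun q => (Rb ^ q.1) q.2 q.2) with hc_def
  have hc0 : 0 < c := by
    apply lt_min (by positivity)
    exact (Finset.lt_inf'_iff hsne).mpr fun q _ => hpos q.2 q.1
  have hcle : ∀ (k : ℕ) (i : Fin n), c ≤ (Rb ^ k) i i := by
    intro k i
    rcases le_or_gt k K with h | h
    · refine (min_le_right _ _).trans ?_
      have hmemp : ((k, i) : ℕ × Fin n) ∈ (Finset.range (K + 1)) ×ˢ Finset.univ :=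
        Finset.mem_product.mpr ⟨Finset.mem_range.mpr (Nat.lt_succ_of_le h), Finset.mem_univ i⟩
      exact Finset.inf'_le _ hmemp
    · refine (min_le_left _ _).trans ?_
      have h1 : π i - (Rb ^ k) i i ≤ κ * σ ^ k := by
        have := (abs_le.mp (hentry k i)).1; linarith
      have h2 : κ * σ ^ k < m / 2 := hKk k h.le
      have h3 : m ≤ π i := Finset.inf'_le π (Finset.mem_univ i)
      linarith
  -- part 2
  have hbdd : BddAbove (Set.range fun k : ℕ => ⨆ i, ((Rb ^ k) i i)⁻¹) := by
    refine ⟨c⁻¹, ?_⟩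
    rintro x ⟨k, rfl⟩
    exact ciSup_le fun i => inv_anti₀ hc0 (hcle k i)
  -- v bounds every diagonal inverse
  have hvle : ∀ (k : ℕ) (i : Fin n),
      ((Rb ^ k) i i)⁻¹ ≤ ⨆ m : ℕ, ⨆ j, ((Rb ^ m) j j)⁻¹ := by
    intro k i
    refine le_trans ?_ (le_ciSup hbdd k)
    exact le_ciSup (f := fun j : Fin n => ((Rb ^ k) j j)⁻¹) (Set.Finite.bddAbove (Set.finite_range _)) i
  -- part 3 via limits
  have htend : ∀ i : Fin n,
      Tendsto (fun k => ((Rb ^ k) i i)⁻¹) atTop (nhds (π i)⁻¹) := by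
    intro i
    have h0 : Tendsto (fun k : ℕ => κ * σ ^ k) atTop (nhds 0) := by
      have := (tendsto_pow_atTop_nhds_zero_of_lt_one hσ0.le hσ1).const_mul κ
      simpa using this
    have h1 : Tendsto (fun k => (Rb ^ k) i i - π i) atTop (nhds 0) :=
      squeeze_zero_norm (fun k => by simpa using hentry k i) h0
    have h2 : Tendsto (fun k => (Rb ^ k) i i) atTop (nhds (π i)) := by
      have := h1.add_const (π i); simpa using this
    exact h2.inv₀ (hπpos i).ne'
  have hpart3 : ∀ i : Fin n, (π i)⁻¹ ≤ ⨆ m : ℕ, ⨆ j, ((Rb ^ m) j j)⁻¹ :=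
    fun i => le_of_tendsto' (htend i) fun k => hvle k i
  refine ⟨hpos, hbdd, hpart3, ?_⟩
  -- part 4
  intro k i
  set v : ℝ := ⨆ m : ℕ, ⨆ j, ((Rb ^ m) j j)⁻¹ with hv_def
  have ha := hpos i k
  have hb := hπpos i
  have hv1 : ((Rb ^ k) i i)⁻¹ ≤ v := hvle k i
  have hv2 : (π i)⁻¹ ≤ v := hpart3 i
  have hv0 : 0 < v := lt_of_lt_of_le (inv_pos.mpr hb) hv2
  have key : |((Rb ^ k) i i)⁻¹ - (π i)⁻¹|
      = ((Rb ^ k) i i)⁻¹ * (π i)⁻¹ * |(Rb ^ k) i i - π i| := by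
    rw [inv_sub_inv ha.ne' hb.ne', abs_div, abs_of_pos (mul_pos ha hb), abs_sub_comm,
      div_eq_mul_inv, mul_inv]
    ring
  have hsq : Real.sqrt n ≥ 1 := by
    rw [show (1:ℝ) = Real.sqrt 1 by rw [Real.sqrt_one]]
    exact Real.sqrt_le_sqrt (by exact_mod_cast hn)
  have hstep : ((Rb ^ k) i i)⁻¹ * (π i)⁻¹ * |(Rb ^ k) i i - π i| ≤ v * v * (κ * σ ^ k) := by
    have h1 : ((Rb ^ k) i i)⁻¹ * (π i)⁻¹ ≤ v * v :=
      mul_le_mul hv1 hv2 (inv_pos.mpr hb).le hv0.le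
    exact mul_le_mul h1 (hentry k i) (abs_nonneg _) (by positivity)
  rw [key]
  refine hstep.trans ?_
  have : v * v * (κ * σ ^ k) = v ^ 2 * 1 * κ * σ ^ k := by ring
  rw [this]
  gcongr
end

section
/- Suppose κ > 0 and σ ∈ (0,1) satisfy ‖R̄^k − 1_n π^T‖ ≤ κ σ^k for all k ≥ 0, and let ṽ := sup_{k≥0} max_{1≤i≤n} ((R̄^k)_{ii})^{-1} (finite). Then for all k ≥ 1: max_{1≤i≤n} |((R̄^k)_{ii})^{-1} − ((R̄^{k−1})_{ii})^{-1}| ≤ 2 ṽ² √n κ σ^{k−1}. -/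
open Matrix Filter
open scoped Kronecker

/-! The diagonal entries `d k = (R̄^k)ᵢᵢ` are nonnegative with inverses at most `ṽ`, so
`|(d k)⁻¹ - (d (k-1))⁻¹| ≤ ṽ² |d k - d (k-1)|`. An entry of a matrix is bounded by its spectral
norm (the matrix maps a unit vector to its column), so `|d k - πᵢ| ≤ κ σ^k`, and the triangle
inequality through `πᵢ` gives `|d k - d (k-1)| ≤ 2 κ σ^(k-1)`; the factor `√n ≥ 1` is slack. -/

section SpectralNorm

variable {ι : Type*} [Fintype ι]

lemma eucNorm_eq_norm_toLp (z : ι → ℝ) : eucNorm z = ‖WithLp.toLp 2 z‖ := by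
  simp [eucNorm, EuclideanSpace.norm_eq]

lemma specNorm_eq_norm_toEuclideanCLM [DecidableEq ι] (A : Matrix ι ι ℝ) :
    specNorm A = ‖Matrix.toEuclideanCLM (𝕜 := ℝ) A‖ := by
  rw [← ContinuousLinearMap.sSup_unitClosedBall_eq_norm, specNorm]
  congr 1
  ext c
  constructor
  · rintro ⟨z, hz, rfl⟩
    refine ⟨WithLp.toLp 2 z, by simpa [eucNorm_eq_norm_toLp] using hz, ?_⟩
    simp [eucNorm_eq_norm_toLp]
  · rintro ⟨x, hx, rfl⟩
    refine ⟨WithLp.ofLp x, by simpa [eucNorm_eq_norm_toLp] using hx, ?_⟩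
    rw [eucNorm_eq_norm_toLp, ← Matrix.toEuclideanCLM_toLp, WithLp.toLp_ofLp]

lemma abs_apply_le_specNorm (A : Matrix ι ι ℝ) (i j : ι) : |A i j| ≤ specNorm A := by
  classical
  set f := Matrix.toEuclideanCLM (𝕜 := ℝ) A
  rw [specNorm_eq_norm_toEuclideanCLM]
  calc |A i j| = ‖f (EuclideanSpace.single j 1) i‖ := by simp [f]
    _ ≤ ‖f (EuclideanSpace.single j 1)‖ := PiLp.norm_apply_le _ _
    _ ≤ ‖f‖ := by simpa using f.le_opNorm (EuclideanSpace.single j 1)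

end SpectralNorm

lemma inv_le_sq_mul_of_inv_le {b v : ℝ} (hb : 0 ≤ b) (hbv : b⁻¹ ≤ v) : b⁻¹ ≤ v ^ 2 * b := by
  rcases hb.eq_or_lt with rfl | hb
  · simp
  calc b⁻¹ = b⁻¹ * b⁻¹ * b := by field_simp
    _ ≤ v ^ 2 * b := by
      have : 0 ≤ v := (inv_nonneg.2 hb.le).trans hbv
      rw [sq]; gcongr

lemma abs_inv_sub_inv_le_sq_mul {a b v : ℝ} (ha : 0 ≤ a) (hb : 0 ≤ b) (hav : a⁻¹ ≤ v)
    (hbv : b⁻¹ ≤ v) : |a⁻¹ - b⁻¹| ≤ v ^ 2 * |a - b| := by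
  rcases ha.eq_or_lt with rfl | ha
  · simpa [abs_of_nonneg hb] using inv_le_sq_mul_of_inv_le hb hbv
  rcases hb.eq_or_lt with rfl | hb
  · simpa [abs_of_nonneg ha.le] using inv_le_sq_mul_of_inv_le ha.le hav
  have hprod : a⁻¹ * b⁻¹ ≤ v ^ 2 := by
    rw [sq]; exact mul_le_mul hav hbv (inv_nonneg.2 hb.le) ((inv_nonneg.2 ha.le).trans hav)
  calc |a⁻¹ - b⁻¹| = a⁻¹ * b⁻¹ * |a - b| := by
        rw [inv_sub_inv ha.ne' hb.ne', abs_div, abs_sub_comm, abs_of_pos (mul_pos ha hb)]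
        field_simp
    _ ≤ v ^ 2 * |a - b| := by gcongr

lemma abs_succ_sub_le_of_abs_sub_le_geometric {x : ℕ → ℝ} {c C σ : ℝ} (hσ : σ ≤ 1)
    (hx : ∀ k, |x k - c| ≤ C * σ ^ k) (m : ℕ) : |x (m + 1) - x m| ≤ 2 * (C * σ ^ m) := by
  have hCm : 0 ≤ C * σ ^ m := (abs_nonneg _).trans (hx m)
  have hsucc : C * σ ^ (m + 1) ≤ C * σ ^ m := by
    rw [pow_succ, ← mul_assoc, mul_comm _ σ]
    exact mul_le_of_le_one_left hCm hσ
  calc |x (m + 1) - x m| ≤ |x (m + 1) - c| + |c - x m| := abs_sub_le _ c _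
    _ = |x (m + 1) - c| + |x m - c| := by rw [abs_sub_comm c]
    _ ≤ 2 * (C * σ ^ m) := by linarith [hx (m + 1), hx m]

theorem stmt6_general (n : ℕ) (Rb : Matrix (Fin n) (Fin n) ℝ)
    (hnonneg : ∀ i j, 0 ≤ Rb i j)
    (π : Fin n → ℝ)
    (κ σ : ℝ) (hσ1 : σ < 1)
    (hbound : ∀ k : ℕ,
      specNorm (Rb ^ k - (Matrix.of (fun _ j => π j) : Matrix (Fin n) (Fin n) ℝ)) ≤
        κ * σ ^ k)
    (hbdd : BddAbove (Set.range fun k : ℕ => ⨆ i, ((Rb ^ k) i i)⁻¹)) :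
    ∀ k : ℕ, 1 ≤ k → ∀ i : Fin n,
      |((Rb ^ k) i i)⁻¹ - ((Rb ^ (k - 1)) i i)⁻¹| ≤
        2 * (⨆ m : ℕ, ⨆ j, ((Rb ^ m) j j)⁻¹) ^ 2 * Real.sqrt n * κ * σ ^ (k - 1) := by
  intro k hk i
  obtain ⟨m, rfl⟩ := Nat.exists_eq_add_of_le' hk
  rw [Nat.add_sub_cancel]
  set v := ⨆ m : ℕ, ⨆ j, ((Rb ^ m) j j)⁻¹
  have hv (l : ℕ) : ((Rb ^ l) i i)⁻¹ ≤ v := le_ciSup_of_le hbdd l <|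
    le_ciSup (f := fun j => ((Rb ^ l) j j)⁻¹) (Set.finite_range _).bddAbove i
  have hdiag (l : ℕ) : 0 ≤ (Rb ^ l) i i := Matrix.pow_apply_nonneg hnonneg l i i
  have hconv (l : ℕ) : |(Rb ^ l) i i - π i| ≤ κ * σ ^ l := by
    simpa using (abs_apply_le_specNorm _ i i).trans (hbound l)
  have hsqrt : 1 ≤ Real.sqrt n := Real.one_le_sqrt.2 (by exact_mod_cast i.pos)
  have hgeom : 0 ≤ κ * σ ^ m := (abs_nonneg _).trans (hconv m)
  calc |((Rb ^ (m + 1)) i i)⁻¹ - ((Rb ^ m) i i)⁻¹|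
      ≤ v ^ 2 * |(Rb ^ (m + 1)) i i - (Rb ^ m) i i| :=
        abs_inv_sub_inv_le_sq_mul (hdiag _) (hdiag _) (hv _) (hv _)
    _ ≤ v ^ 2 * (2 * (κ * σ ^ m)) := by
        gcongr
        exact abs_succ_sub_le_of_abs_sub_le_geometric (x := fun l => (Rb ^ l) i i) hσ1.le hconv m
    _ ≤ v ^ 2 * (2 * (κ * σ ^ m)) * Real.sqrt n := le_mul_of_one_le_right (by positivity) hsqrt
    _ = 2 * v ^ 2 * Real.sqrt n * κ * σ ^ m := by ring

/-- `max_i |((R̄^k)_{ii})⁻¹ − ((R̄^{k−1})_{ii})⁻¹| ≤ 2 ṽ² √n κ σ^{k−1}` for `k ≥ 1`,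
where `ṽ = sup_k max_i ((R̄^k)_{ii})⁻¹`. -/
theorem stmt6 (n : ℕ) (hn : 1 ≤ n) (Rb : Matrix (Fin n) (Fin n) ℝ)
    (hnonneg : ∀ i j, 0 ≤ Rb i j) (hrow : ∀ i, ∑ j, Rb i j = 1)
    (hdiag : ∀ i, 0 < Rb i i)
    (hirr : ∀ i j, ∃ k : ℕ, 0 < (Rb ^ k) i j)
    (π : Fin n → ℝ) (hπpos : ∀ i, 0 < π i) (hπsum : ∑ i, π i = 1)
    (hπstat : Matrix.vecMul π Rb = π)
    (κ σ : ℝ) (hκ : 0 < κ) (hσ0 : 0 < σ) (hσ1 : σ < 1)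
    (hbound : ∀ k : ℕ,
      specNorm (Rb ^ k - (Matrix.of (fun _ j => π j) : Matrix (Fin n) (Fin n) ℝ)) ≤
        κ * σ ^ k)
    (hbdd : BddAbove (Set.range fun k : ℕ => ⨆ i, ((Rb ^ k) i i)⁻¹)) :
    ∀ k : ℕ, 1 ≤ k → ∀ i : Fin n,
      |((Rb ^ k) i i)⁻¹ - ((Rb ^ (k - 1)) i i)⁻¹| ≤
        2 * (⨆ m : ℕ, ⨆ j, ((Rb ^ m) j j)⁻¹) ^ 2 * Real.sqrt n * κ * σ ^ (k - 1) :=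
  stmt6_general n Rb hnonneg π κ σ hσ1 hbound hbdd
end
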